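/- Let A be the incidence algebra of a finite poset presented by a bound quiver with full commutativity relations, M a finite-dimensional right A-module, and f : X → M a morphism. Then f is a right interval approximation of M (i.e., a right add{V_I : I interval}-approximation) if and only if for every interval I such that there exists a monomorphism V_I → M, every monomorphism g : V_I → M factors through f. -/

import Mathlib

set_option linter.unusedSectionVars false

open scoped Classical

/-- A persistence module over the poset `P`: a functor `P → Vect_k`.
(This models pointwise finite modules over the incidence algebra `A = kQ/ρ` of the poset.) -/
structure PersMod (k P : Type) [Field k] [PartialOrder P] where
  V : P → Type
  [acg : ∀ a, AddCommGroup (V a)]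
  [mod : ∀ a, Module k (V a)]
  map : ∀ {a b : P}, a ≤ b → (V a →ₗ[k] V b)
  map_id : ∀ a : P, map (le_refl a) = LinearMap.id
  map_comp : ∀ {a b c : P} (h₁ : a ≤ b) (h₂ : b ≤ c),
    (map h₂).comp (map h₁) = map (h₁.trans h₂)

attribute [instance] PersMod.acg PersMod.mod

variable {k P : Type} [Field k] [PartialOrder P]

/-- Morphisms of persistence modules, as a `k`-submodule of the product of Hom-spaces. -/
def PersHomSub (M N : PersMod k P) :
    Submodule k (∀ a : P, M.V a →ₗ[k] N.V a) where
  carrier := {f | ∀ ⦃a b : P⦄ (h : a ≤ b), (N.map h).comp (f a) = (f b).comp (M.map h)}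
  add_mem' := by
    intro f g hf hg a b h
    simp only [Pi.add_apply, LinearMap.comp_add, LinearMap.add_comp, hf h, hg h]
  zero_mem' := by intro a b h; simp
  smul_mem' := by
    intro c f hf a b h
    simp only [Pi.smul_apply, LinearMap.comp_smul, LinearMap.smul_comp, hf h]

/-- The space of morphisms `M → N` of persistence modules. -/
def PersHom (M N : PersMod k P) : Type := ↥(PersHomSub M N)

noncomputable instance (M N : PersMod k P) : AddCommGroup (PersHom M N) :=
  inferInstanceAs (AddCommGroup ↥(PersHomSub M N))
noncomputable instance (M N : PersMod k P) : Module k (PersHom M N) :=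
  inferInstanceAs (Module k ↥(PersHomSub M N))

/-- Composition of morphisms of persistence modules. -/
def PersHom.comp {M N O : PersMod k P} (g : PersHom N O) (f : PersHom M N) :
    PersHom M O :=
  ⟨fun a => (g.1 a).comp (f.1 a), by
    intro a b h
    rw [← LinearMap.comp_assoc, g.2 h, LinearMap.comp_assoc, f.2 h, LinearMap.comp_assoc]⟩

def IsMonoP {M N : PersMod k P} (f : PersHom M N) : Prop :=
  ∀ a : P, Function.Injective (f.1 a)

def IsEpiP {M N : PersMod k P} (f : PersHom M N) : Prop :=
  ∀ a : P, Function.Surjective (f.1 a)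

def IsIsoP {M N : PersMod k P} (f : PersHom M N) : Prop :=
  ∀ a : P, Function.Bijective (f.1 a)

/-- Convexity of a subset of the poset. -/
def IsConvexSet (I : Set P) : Prop :=
  ∀ ⦃a b c : P⦄, a ∈ I → c ∈ I → a ≤ b → b ≤ c → b ∈ I

/-- Zigzag-connectivity of a subset of the poset. -/
def IsConnectedSet (I : Set P) : Prop :=
  I.Nonempty ∧ ∀ a ∈ I, ∀ b ∈ I,
    Relation.ReflTransGen (fun x y => x ∈ I ∧ y ∈ I ∧ (x ≤ y ∨ y ≤ x)) a b

/-- An interval of the poset: a connected convex subset. -/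
def IsIntervalSet (I : Set P) : Prop := IsConvexSet I ∧ IsConnectedSet I

/-- The underlying linear map of the interval module. -/
noncomputable def intervalMap (I : Set P) (a b : P) :
    ↥(if a ∈ I then (⊤ : Submodule k k) else ⊥) →ₗ[k]
      ↥(if b ∈ I then (⊤ : Submodule k k) else ⊥) where
  toFun v := ⟨if a ∈ I ∧ b ∈ I then (v : k) else 0, by
    by_cases hb : b ∈ I
    · simp [hb]
    · have hab : ¬(a ∈ I ∧ b ∈ I) := fun h' => hb h'.2
      rw [if_neg hb, if_neg hab]; exact Submodule.zero_mem _⟩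
  map_add' v w := by
    apply Subtype.ext
    by_cases h' : a ∈ I ∧ b ∈ I <;> simp [h']
  map_smul' c v := by
    apply Subtype.ext
    by_cases h' : a ∈ I ∧ b ∈ I <;> simp [h']

@[simp] lemma intervalMap_coe (I : Set P) (a b : P)
    (v : ↥(if a ∈ I then (⊤ : Submodule k k) else ⊥)) :
    ((intervalMap I a b v : ↥(if b ∈ I then (⊤ : Submodule k k) else ⊥)) : k)
      = if a ∈ I ∧ b ∈ I then (v : k) else 0 := rfl

lemma intervalMem_zero {I : Set P} {a : P} (ha : a ∉ I)
    (v : ↥(if a ∈ I then (⊤ : Submodule k k) else ⊥)) : (v : k) = 0 := by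
  obtain ⟨x, hx⟩ := v
  rw [if_neg ha] at hx
  exact (Submodule.mem_bot k).mp hx

/-- The interval module `V_I` associated to a convex subset `I`. -/
noncomputable def intervalMod (I : Set P) (hI : IsConvexSet I) : PersMod k P where
  V a := ↥(if a ∈ I then (⊤ : Submodule k k) else ⊥)
  map {a b} _ := intervalMap I a b
  map_id a := by
    ext v
    rw [intervalMap_coe]
    by_cases ha : a ∈ I
    · simp [ha]
    · simp only [ha, and_self, if_false, LinearMap.id_coe, id_eq, intervalMem_zero ha v]
  map_comp {a b c} h₁ h₂ := by
    ext v
    rw [LinearMap.comp_apply, intervalMap_coe, intervalMap_coe, intervalMap_coe]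
    by_cases ha : a ∈ I <;> by_cases hb : b ∈ I <;> by_cases hc : c ∈ I <;>
      first
        | (exact absurd (hI ha hc h₁ h₂) hb)
        | simp [ha, hb, hc]

/-- Finite direct sums of persistence modules. -/
noncomputable def dSum {ι : Type} (M : ι → PersMod k P) : PersMod k P where
  V a := ∀ i, (M i).V a
  map {a b} h := LinearMap.pi fun i => ((M i).map h).comp (LinearMap.proj i)
  map_id a := by
    refine LinearMap.ext fun v => ?_
    funext i
    simp [LinearMap.pi_apply, (M i).map_id]
  map_comp {a b c} h₁ h₂ := by
    refine LinearMap.ext fun v => ?_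
    funext i
    simpa [LinearMap.pi_apply] using LinearMap.congr_fun ((M i).map_comp h₁ h₂) (v i)

/-- A persistence module is interval decomposable if it is isomorphic to a finite
direct sum of interval modules. -/
def IntervalDecomposable (W : PersMod k P) : Prop :=
  ∃ (n : ℕ) (J : Fin n → Set P) (hJ : ∀ i, IsIntervalSet (J i))
    (e : PersHom W (dSum fun i => intervalMod (J i) (hJ i).1)), IsIsoP e

/-- The combined morphism `⊕ᵢ Mᵢ → N` of a finite family of morphisms `Mᵢ → N`. -/
noncomputable def combineHom {ι : Type} [Fintype ι] {Mf : ι → PersMod k P}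
    {N : PersMod k P} (f : ∀ i, PersHom (Mf i) N) : PersHom (dSum Mf) N :=
  ⟨fun a => ∑ i, ((f i).1 a).comp (LinearMap.proj i), by
    intro a b h
    refine LinearMap.ext fun v => ?_
    simp only [LinearMap.comp_apply, LinearMap.sum_apply, LinearMap.proj_apply, map_sum]
    refine Finset.sum_congr rfl fun i _ => ?_
    have := LinearMap.congr_fun ((f i).2 h) (v i)
    exact this⟩

/-- `f : X → M` is a right interval approximation: every morphism from an interval module
to `M` factors through `f`. -/
def IsRightIntervalApprox {k P : Type} [Field k] [PartialOrder P]
    {X M : PersMod k P} (f : PersHom X M) : Prop :=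
  ∀ (J : Set P) (hJ : IsIntervalSet J) (g : PersHom (intervalMod J hJ.1) M),
    ∃ h : PersHom (intervalMod J hJ.1) X, f.comp h = g

/-! The support `K` of a morphism `g : V_J → M` (the points where `g` is nonzero) is a convex
subset of `J`, closed downwards inside `J`, but possibly disconnected. For each zigzag component
`C` of `K`, the projection `V_J → V_C` is a morphism and `g` restricts to a monomorphism
`V_C → M`, which factors through `f` by hypothesis. Comparable points of `K` lie in the same
component, so these factorizations, precomposed with the projections, glue to one of `g`. -/

open Relation

@[ext] lemma PersHom.ext {M N : PersMod k P} {f g : PersHom M N} (h : ∀ a, f.1 a = g.1 a) :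
    f = g :=
  Subtype.ext (funext h)

section IntervalModule

variable {I J S : Set P} {N : PersMod k P}

lemma intervalMap_surjective {a b : P} (ha : a ∈ I) :
    Function.Surjective (intervalMap (k := k) I a b) := by
  intro w
  by_cases hb : b ∈ I
  · exact ⟨⟨w, by simp [ha]⟩, Subtype.ext (by simp [ha, hb])⟩
  · exact ⟨0, Subtype.ext (by simp [intervalMem_zero hb w])⟩

lemma PersHom.app_eq_zero_of_not_mem {hI : IsConvexSet I} (g : PersHom (intervalMod I hI) N)
    {a : P} (ha : a ∉ I) : g.1 a = 0 :=
  LinearMap.ext fun v => by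
    rw [show v = 0 from Subtype.ext (intervalMem_zero ha v), map_zero, LinearMap.zero_apply]

lemma Submodule.injective_of_ne_zero {p : Submodule k k} {V : Type*} [AddCommGroup V]
    [Module k V] {φ : p →ₗ[k] V} (hφ : φ ≠ 0) : Function.Injective φ := by
  refine (injective_iff_map_eq_zero φ).2 fun w hw => ?_
  by_contra hw0
  have hw' : (w : k) ≠ 0 := fun h => hw0 (Subtype.ext h)
  refine hφ (LinearMap.ext fun x => ?_)
  have hx : x = ((x : k) * (w : k)⁻¹) • w := Subtype.ext (by simp [hw'])
  rw [hx, map_smul, hw, smul_zero, LinearMap.zero_apply]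

noncomputable def castMap (K L : Set P) (a : P) :
    ↥(if a ∈ K then (⊤ : Submodule k k) else ⊥) →ₗ[k]
      ↥(if a ∈ L then (⊤ : Submodule k k) else ⊥) where
  toFun v := ⟨if a ∈ K ∧ a ∈ L then (v : k) else 0, by
    by_cases haL : a ∈ L
    · simp [haL]
    · rw [if_neg fun h : a ∈ K ∧ a ∈ L => haL h.2]
      exact zero_mem _⟩
  map_add' v w := Subtype.ext (by by_cases h : a ∈ K ∧ a ∈ L <;> simp [h])
  map_smul' c v := Subtype.ext (by by_cases h : a ∈ K ∧ a ∈ L <;> simp [h])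

@[simp] lemma castMap_coe (K L : Set P) (a : P)
    (v : ↥(if a ∈ K then (⊤ : Submodule k k) else ⊥)) :
    (castMap K L a v : k) = if a ∈ K ∧ a ∈ L then (v : k) else 0 :=
  rfl

lemma castMap_castMap {a : P} (haS : a ∈ S) (haJ : a ∈ J)
    (v : ↥(if a ∈ J then (⊤ : Submodule k k) else ⊥)) :
    castMap S J a (castMap J S a v) = v :=
  Subtype.ext (by simp [haS, haJ])

lemma castMap_intervalMap {K L : Set P} {a b : P} (h : a ∈ K → b ∈ L → (b ∈ K ↔ a ∈ L))
    (v : ↥(if a ∈ K then (⊤ : Submodule k k) else ⊥)) :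
    castMap K L b (intervalMap K a b v) = intervalMap L a b (castMap K L a v) :=
  Subtype.ext <| by
    by_cases ha : a ∈ K
    · by_cases hb : b ∈ L
      · simp [ha, hb, h ha hb]
      · simp [hb]
    · simp [ha]

noncomputable def intervalProj (hJ : IsConvexSet J) (hS : IsConvexSet S) (hSJ : S ⊆ J)
    (hlow : ∀ ⦃a b⦄, a ≤ b → a ∈ J → b ∈ S → a ∈ S) :
    PersHom (intervalMod J hJ) (intervalMod (k := k) S hS) :=
  ⟨castMap J S, fun _ _ hab => LinearMap.ext fun v =>
    (castMap_intervalMap (fun ha hb => iff_of_true (hSJ hb) (hlow hab ha hb)) v).symm⟩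

end IntervalModule

section Zigzag

variable {K : Set P} {a b : P}

def zigzag (K : Set P) (x y : P) : Prop := x ∈ K ∧ y ∈ K ∧ (x ≤ y ∨ y ≤ x)

instance (K : Set P) : Std.Symm (zigzag K) := ⟨fun _ _ h => ⟨h.2.1, h.1, h.2.2.symm⟩⟩

def zigzagComponent (K : Set P) (a : P) : Set P := {b | b ∈ K ∧ ReflTransGen (zigzag K) a b}

lemma zigzagComponent_subset : zigzagComponent K a ⊆ K := fun _ hb => hb.1

lemma mem_zigzagComponent_self (ha : a ∈ K) : a ∈ zigzagComponent K a := ⟨ha, .refl⟩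

lemma zigzagComponent_eq_of_mem (hb : b ∈ zigzagComponent K a) :
    zigzagComponent K b = zigzagComponent K a :=
  Set.ext fun _ => and_congr_right fun _ => ⟨(hb.2.trans ·), ((symm hb.2).trans ·)⟩

lemma mem_zigzagComponent_of_comparable {x y : P} (hx : x ∈ zigzagComponent K a) (hy : y ∈ K)
    (hxy : x ≤ y ∨ y ≤ x) : y ∈ zigzagComponent K a :=
  ⟨hy, hx.2.tail ⟨hx.1, hy, hxy⟩⟩

lemma isConvexSet_zigzagComponent (hK : IsConvexSet K) : IsConvexSet (zigzagComponent K a) :=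
  fun _ _ _ hx hz hxy hyz => mem_zigzagComponent_of_comparable hx (hK hx.1 hz.1 hxy hyz) (.inl hxy)

lemma isConnectedSet_zigzagComponent (ha : a ∈ K) : IsConnectedSet (zigzagComponent K a) := by
  have path : ∀ x ∈ zigzagComponent K a, ReflTransGen (zigzag (zigzagComponent K a)) a x := by
    rintro x ⟨-, hx⟩
    induction hx with
    | refl => exact .refl
    | tail hab hbc ih =>
      have hb : _ ∈ zigzagComponent K a := ⟨hbc.1, hab⟩
      exact ih.tail ⟨hb, mem_zigzagComponent_of_comparable hb hbc.2.1 hbc.2.2, hbc.2.2⟩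
  exact ⟨⟨a, mem_zigzagComponent_self ha⟩, fun x hx y hy => (symm (path x hx)).trans (path y hy)⟩

end Zigzag

def PersHom.support {M N : PersMod k P} (g : PersHom M N) : Set P := {a | g.1 a ≠ 0}

section Support

variable {J S : Set P} {hJ : IsConvexSet J} {M : PersMod k P} (g : PersHom (intervalMod J hJ) M)

lemma PersHom.support_subset : g.support ⊆ J :=
  fun _ ha => by_contra fun h => ha (g.app_eq_zero_of_not_mem h)

lemma PersHom.mem_support_of_le {a b : P} (hab : a ≤ b) (ha : a ∈ J) (hb : b ∈ g.support) :
    a ∈ g.support := fun h0 => hb <| LinearMap.ext fun w => by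
  obtain ⟨v, rfl⟩ := intervalMap_surjective (k := k) (b := b) ha w
  calc g.1 b (intervalMap J a b v) = M.map hab (g.1 a v) := (LinearMap.congr_fun (g.2 hab) v).symm
    _ = 0 := by rw [h0]; exact map_zero (M.map hab)

lemma PersHom.isConvexSet_support : IsConvexSet g.support :=
  fun _ _ _ ha hc hab hbc =>
    g.mem_support_of_le hbc (hJ (g.support_subset ha) (g.support_subset hc) hab hbc) hc

noncomputable def PersHom.restrict (hS : IsConvexSet S) (hSJ : S ⊆ J)
    (hup : ∀ ⦃a b⦄, a ≤ b → a ∈ S → b ∈ g.support → b ∈ S) : PersHom (intervalMod S hS) M :=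
  ⟨fun a => (g.1 a).comp (castMap S J a), fun a b hab => LinearMap.ext fun v => by
    refine (LinearMap.congr_fun (g.2 hab) (castMap S J a v)).trans ?_
    by_cases hb : b ∈ g.support
    · exact congrArg (g.1 b) (castMap_intervalMap
        (fun ha _ => iff_of_true (hup hab ha hb) (hSJ ha)) v).symm
    · have hb0 : g.1 b = 0 := not_not.1 hb
      exact (LinearMap.congr_fun hb0 _).trans (LinearMap.congr_fun hb0
        (castMap S J b ((intervalMod S hS).map hab v))).symm⟩

lemma PersHom.restrict_mono (hS : IsConvexSet S) (hSJ : S ⊆ J)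
    (hup : ∀ ⦃a b⦄, a ≤ b → a ∈ S → b ∈ g.support → b ∈ S) (hSsupp : S ⊆ g.support) :
    IsMonoP (g.restrict hS hSJ hup) := by
  intro a
  by_cases ha : a ∈ S
  · refine Submodule.injective_of_ne_zero (k := k) fun h0 => hSsupp ha ?_
    have hcast : Function.Surjective (castMap (k := k) S J a) :=
      fun w => ⟨castMap J S a w, castMap_castMap ha (hSJ ha) w⟩
    exact (LinearMap.cancel_right hcast).1 (h0.trans (LinearMap.zero_comp _).symm)
  · exact fun v w _ => Subtype.ext ((intervalMem_zero ha v).trans (intervalMem_zero ha w).symm)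

lemma PersHom.mem_zigzagComponent_support_of_le {a x y : P} (hxy : x ≤ y) (hx : x ∈ J)
    (hy : y ∈ zigzagComponent g.support a) : x ∈ zigzagComponent g.support a :=
  mem_zigzagComponent_of_comparable hy (g.mem_support_of_le hxy hx hy.1) (.inr hxy)

end Support

noncomputable def PersHom.glue {N X : PersMod k P} (ψ : Set P → PersHom N X)
    (hψ : ∀ S a, a ∉ S → (ψ S).1 a = 0) (c : P → Set P) (hc : ∀ a b, b ∈ c a → c b = c a) :
    PersHom N X :=
  ⟨fun a => (ψ (c a)).1 a, fun a b hab => by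
    dsimp only
    by_cases hb : b ∈ c a
    · rw [(ψ (c a)).2 hab, hc a b hb]
    by_cases ha : a ∈ c b
    · rw [hc b a ha]
      exact (ψ (c b)).2 hab
    rw [(ψ (c a)).2 hab, hψ _ _ hb, ← (ψ (c b)).2 hab, hψ _ _ ha, LinearMap.zero_comp,
      LinearMap.comp_zero]⟩

section Factorization

variable {X M : PersMod k P} (f : PersHom X M)

lemma PersHom.exists_comp_eq_on_zigzagComponent
    (H : ∀ (I : Set P) (hI : IsIntervalSet I) (m : PersHom (intervalMod I hI.1) M), IsMonoP m →
      ∃ h : PersHom (intervalMod I hI.1) X, f.comp h = m)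
    {J : Set P} {hJ : IsConvexSet J} (g : PersHom (intervalMod J hJ) M)
    {b : P} (hb : b ∈ g.support) :
    ∃ ψ : PersHom (intervalMod J hJ) X, (∀ a ∉ zigzagComponent g.support b, ψ.1 a = 0) ∧
      ∀ a ∈ zigzagComponent g.support b, (f.comp ψ).1 a = g.1 a := by
  set C := zigzagComponent g.support b
  have hCJ : C ⊆ J := zigzagComponent_subset.trans g.support_subset
  have hC : IsIntervalSet C :=
    ⟨isConvexSet_zigzagComponent g.isConvexSet_support, isConnectedSet_zigzagComponent hb⟩
  have hup : ∀ ⦃x y⦄, x ≤ y → x ∈ C → y ∈ g.support → y ∈ C :=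
    fun _ _ hxy hx hy => mem_zigzagComponent_of_comparable hx hy (.inl hxy)
  obtain ⟨φ, hφ⟩ := H C hC _ (g.restrict_mono hC.1 hCJ hup zigzagComponent_subset)
  refine ⟨φ.comp (intervalProj hJ hC.1 hCJ fun _ _ => g.mem_zigzagComponent_support_of_le),
    fun a ha => ?_, fun a ha => LinearMap.ext fun v => ?_⟩
  · show (φ.1 a).comp (castMap J C a) = 0
    rw [φ.app_eq_zero_of_not_mem ha]
    exact LinearMap.zero_comp _
  · show (f.comp φ).1 a (castMap J C a v) = g.1 a v
    rw [hφ]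
    exact congrArg (g.1 a) (castMap_castMap ha (hCJ ha) v)

theorem PersHom.exists_comp_eq_of_monos_factor
    (H : ∀ (I : Set P) (hI : IsIntervalSet I) (m : PersHom (intervalMod I hI.1) M), IsMonoP m →
      ∃ h : PersHom (intervalMod I hI.1) X, f.comp h = m)
    {J : Set P} {hJ : IsConvexSet J} (g : PersHom (intervalMod J hJ) M) :
    ∃ h : PersHom (intervalMod J hJ) X, f.comp h = g := by
  set C := zigzagComponent g.support
  -- Choosing `ψ` as a function of the component, not of a point, makes the choices agree
  -- on each component.
  have key : ∀ S : Set P, ∃ ψ : PersHom (intervalMod J hJ) X,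
      (∀ a ∉ S, ψ.1 a = 0) ∧ ∀ a ∈ S, S = C a → (f.comp ψ).1 a = g.1 a := by
    intro S
    by_cases hS : ∃ b ∈ g.support, S = C b
    · obtain ⟨b, hb, rfl⟩ := hS
      obtain ⟨ψ, hψ0, hψ⟩ := f.exists_comp_eq_on_zigzagComponent H g hb
      exact ⟨ψ, hψ0, fun a ha _ => hψ a ha⟩
    · exact ⟨0, fun _ _ => rfl, fun a ha hSa => (hS ⟨a, (hSa ▸ ha).1, hSa⟩).elim⟩
  choose ψ hψ0 hψ using key
  refine ⟨PersHom.glue ψ hψ0 C fun _ _ => zigzagComponent_eq_of_mem, PersHom.ext fun a => ?_⟩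
  by_cases ha : a ∈ g.support
  · exact hψ _ a (mem_zigzagComponent_self ha) rfl
  · show (f.1 a).comp ((ψ (C a)).1 a) = g.1 a
    rw [hψ0 _ a fun h => ha h.1, LinearMap.comp_zero]
    exact (not_not.1 ha).symm

end Factorization

theorem rightIntervalApprox_iff_monos_factor_general
    {k P : Type} [Field k] [PartialOrder P]
    (X M : PersMod k P) (f : PersHom X M) :
    IsRightIntervalApprox f ↔
      ∀ (I : Set P) (hI : IsIntervalSet I),
        (∃ m : PersHom (intervalMod I hI.1) M, IsMonoP m) →
        ∀ g : PersHom (intervalMod I hI.1) M, IsMonoP g →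
          ∃ h : PersHom (intervalMod I hI.1) X, f.comp h = g :=
  ⟨fun hf I hI _ g _ => hf I hI g,
    fun H _ _ => f.exists_comp_eq_of_monos_factor fun I hI m hm => H I hI ⟨m, hm⟩ m hm⟩

/-- For `X` interval decomposable, `f : X → M` is a right interval
approximation of `M` iff for every interval `I` admitting a monomorphism `V_I → M`,
every monomorphism `g : V_I → M` factors through `f`. -/
theorem rightIntervalApprox_iff_monos_factor
    {k P : Type} [Field k] [PartialOrder P] [Fintype P]
    (X M : PersMod k P)
    (hXfin : ∀ a, FiniteDimensional k (X.V a)) (hMfin : ∀ a, FiniteDimensional k (M.V a))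
    (hX : IntervalDecomposable X) (f : PersHom X M) :
    IsRightIntervalApprox f ↔
      ∀ (I : Set P) (hI : IsIntervalSet I),
        (∃ m : PersHom (intervalMod I hI.1) M, IsMonoP m) →
        ∀ g : PersHom (intervalMod I hI.1) M, IsMonoP g →
          ∃ h : PersHom (intervalMod I hI.1) X, f.comp h = g :=
  rightIntervalApprox_iff_monos_factor_general X M f
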